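/- Let s ≥ 1 be an integer, let G be an H_s-free graph with clique number ω, and let 𝓛 = (L_0, L_1, …, L_k) be an optimal s-template in G whose value is at least 28ω^{s+6}. Let c satisfy the Kővári–Sós–Turán-type bound for H_s. Then the set of all vertices of N(𝓛) that are dense with respect to 𝓛 induces a subgraph of chromatic number at most (14ω^{s+6})^{c+1}·ω. -/

import Mathlib

open SimpleGraph Set

/-- `G` contains no induced subgraph isomorphic to `H`. -/
def IsInducedFree {V : Type*} {W : Type*} (G : SimpleGraph V) (H : SimpleGraph W) : Prop :=
  ∀ s : Set V, ¬ Nonempty ((G.induce s) ≃g H)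

/-- The double star `H_s`: two adjacent internal vertices `0` and `1`; `0` is adjacent to the
`s` leaves `2,…,s+1` and `1` is adjacent to the `s` leaves `s+2,…,2s+1`. -/
def doubleStarGraph (s : ℕ) : SimpleGraph (Fin (2*s+2)) :=
  SimpleGraph.fromRel (fun a b =>
    ((a : ℕ) = 0 ∧ (b : ℕ) = 1) ∨
    ((a : ℕ) = 0 ∧ 2 ≤ (b : ℕ) ∧ (b : ℕ) ≤ s+1) ∨
    ((a : ℕ) = 1 ∧ s+2 ≤ (b : ℕ)))

/-- A graph has degeneracy at most `d` if every nonempty subgraph has a vertex whose degree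
in that subgraph is at most `d`. -/
def DegeneracyAtMost {V : Type*} (G : SimpleGraph V) (d : ℕ) : Prop :=
  ∀ H : G.Subgraph, H.verts.Nonempty → ∃ v ∈ H.verts, (H.neighborSet v).ncard ≤ d

/-- A `(k,d)`-colouring: a partition of the vertex set into `k` parts, each inducing a
subgraph of degeneracy at most `d`. -/
def KDColorable {V : Type*} (G : SimpleGraph V) (k d : ℕ) : Prop :=
  ∃ f : V → Fin k, ∀ i : Fin k, DegeneracyAtMost (G.induce {v | f v = i}) d

/-- `G` contains the complete bipartite graph `K_{t,t}` as a (not necessarily induced)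
subgraph. -/
def ContainsKtt {V : Type*} (G : SimpleGraph V) (t : ℕ) : Prop :=
  ∃ A B : Finset V, A.card = t ∧ B.card = t ∧ Disjoint A B ∧
    ∀ a ∈ A, ∀ b ∈ B, G.Adj a b

/-- A set of vertices is stable (independent) if no two of its members are adjacent. -/
def IsStableSet {V : Type*} (G : SimpleGraph V) (S : Set V) : Prop :=
  ∀ a ∈ S, ∀ b ∈ S, a ≠ b → ¬ G.Adj a b

/-- An `s`-template in `G`: a clique `L0` complete to all the `L i`, pairwise disjoint sets
`L 1, …, L k` (here indexed by `Fin k`) whose sizes lie between `ω^{s+5}` and `14 ω^{s+6}`,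
such that each vertex of `L i` has at most `ω^{s+3}` non-neighbours in each other `L j`. -/
def IsTemplate {V : Type*} (G : SimpleGraph V) (s : ℕ) (L0 : Set V) {k : ℕ}
    (L : Fin k → Set V) : Prop :=
  (∀ i : Fin k, Disjoint L0 (L i)) ∧
  (Pairwise fun i j : Fin k => Disjoint (L i) (L j)) ∧
  G.IsClique L0 ∧
  (∀ u ∈ L0, ∀ i : Fin k, ∀ v ∈ L i, G.Adj u v) ∧
  (∀ i : Fin k, G.cliqueNum ^ (s+5) ≤ (L i).ncard ∧ (L i).ncard ≤ 14 * G.cliqueNum ^ (s+6)) ∧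
  (∀ i j : Fin k, i ≠ j → ∀ v ∈ L i,
    ({u ∈ L j | ¬ G.Adj v u}).ncard ≤ G.cliqueNum ^ (s+3))

/-- The value of an `s`-template. -/
noncomputable def templateValue {V : Type*} (G : SimpleGraph V) (s : ℕ) (L0 : Set V) {k : ℕ}
    (L : Fin k → Set V) : ℕ :=
  (⋃ i, L i).ncard + 7 * G.cliqueNum ^ (s+5) * L0.ncard + k * G.cliqueNum ^ (s+5)

/-- An optimal `s`-template: one of maximum value among all `s`-templates in `G`. -/
def IsOptimalTemplate {V : Type*} (G : SimpleGraph V) (s : ℕ) (L0 : Set V) {k : ℕ}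
    (L : Fin k → Set V) : Prop :=
  IsTemplate G s L0 L ∧
  ∀ (k' : ℕ) (L0' : Set V) (L' : Fin k' → Set V), IsTemplate G s L0' L' →
    templateValue G s L0' L' ≤ templateValue G s L0 L

/-- `V(𝓛)`, the vertex set of a template. -/
def templateVerts {V : Type*} (L0 : Set V) {k : ℕ} (L : Fin k → Set V) : Set V :=
  L0 ∪ ⋃ i, L i

/-- `N(𝓛)`: the vertices outside `V(𝓛)` with a neighbour in `L 1 ∪ ⋯ ∪ L k`. -/
def templateNbhd {V : Type*} (G : SimpleGraph V) (L0 : Set V) {k : ℕ}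
    (L : Fin k → Set V) : Set V :=
  {v | v ∉ templateVerts L0 L ∧ ∃ i : Fin k, ∃ u ∈ L i, G.Adj v u}


/-- A vertex `v` is pendant with respect to the template: there are distinct `i, j`, a vertex
`u ∈ L j` and a stable set `S ⊆ L i` of `s+1` common neighbours of `u` such that `v` is not
adjacent to `u` and `v` has exactly one neighbour in `S`. -/
def TemplatePendant {V : Type*} (G : SimpleGraph V) (s : ℕ) {k : ℕ}
    (L : Fin k → Set V) (v : V) : Prop :=
  ∃ i j : Fin k, i ≠ j ∧ ∃ u ∈ L j, ∃ S : Set V, S ⊆ L i ∧ S.ncard = s + 1 ∧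
    IsStableSet G S ∧ (∀ w ∈ S, G.Adj u w) ∧ ¬ G.Adj v u ∧ ({w ∈ S | G.Adj v w}).ncard = 1

/-- A vertex `v` is dense with respect to the template: there are `j` and `u ∈ L j` such that
for all `i ≠ j`, fewer than `ω^{s+2}/14` vertices of `L i` are adjacent to `u` and not to `v`. -/
def TemplateDense {V : Type*} (G : SimpleGraph V) (s : ℕ) {k : ℕ}
    (L : Fin k → Set V) (v : V) : Prop :=
  ∃ j : Fin k, ∃ u ∈ L j, ∀ i : Fin k, i ≠ j →
    14 * ({w ∈ L i | G.Adj u w ∧ ¬ G.Adj v w}).ncard < G.cliqueNum ^ (s+2)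

/-- A vertex `v` is pure with respect to the template: it has no neighbour in at least two of
the sets `L i`, and for each `i`, either it has no neighbour in `L i` or it has at most
`ω^{s+2}/7` non-neighbours in `L i`. -/
def TemplatePure {V : Type*} (G : SimpleGraph V) (s : ℕ) {k : ℕ}
    (L : Fin k → Set V) (v : V) : Prop :=
  (∃ i₁ i₂ : Fin k, i₁ ≠ i₂ ∧ (∀ w ∈ L i₁, ¬ G.Adj v w) ∧ (∀ w ∈ L i₂, ¬ G.Adj v w)) ∧
  (∀ i : Fin k, (∀ w ∈ L i, ¬ G.Adj v w) ∨
    7 * ({w ∈ L i | ¬ G.Adj v w}).ncard ≤ G.cliqueNum ^ (s+2))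

/-- `M_I`: the pure vertices `v` (with respect to the template) whose set `I_v` of indices `i`
such that `v` has a neighbour in `L i` equals `I`. -/
def templatePart {V : Type*} (G : SimpleGraph V) (s : ℕ) (L0 : Set V) {k : ℕ}
    (L : Fin k → Set V) (I : Set (Fin k)) : Set V :=
  {v | v ∈ templateNbhd G L0 L ∧ TemplatePure G s L v ∧
    ∀ i : Fin k, (∃ u ∈ L i, G.Adj v u) ↔ i ∈ I}

/-- Two disjoint sets `A, B` are `s`-crowded if there is no stable set meeting each of them
in exactly `s` vertices. -/
def SCrowded {V : Type*} (G : SimpleGraph V) (s : ℕ) (A B : Set V) : Prop :=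
  ¬ ∃ X : Set V, IsStableSet G X ∧ (X ∩ A).ncard = s ∧ (X ∩ B).ncard = s

/-- `c` satisfies the Kővári–Sós–Turán-type bound for `H_s`: every `H_s`-free graph either
contains `K_{t,t}` as a subgraph or has degeneracy less than `t^c`. -/
def KSTBound (s c : ℕ) : Prop :=
  ∀ (W : Type) [Fintype W], ∀ G' : SimpleGraph W, IsInducedFree G' (doubleStarGraph s) →
    ∀ t : ℕ, ContainsKtt G' t ∨ ∃ D : ℕ, D < t ^ c ∧ DegeneracyAtMost G' D

/-- `Z(𝓛)`: the union of `L0` with the set of vertices of `N(𝓛)` having at most `ω^{s+2}/4`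
non-neighbours in each `L i`. -/
def templateZ {V : Type*} (G : SimpleGraph V) (s : ℕ) (L0 : Set V) {k : ℕ}
    (L : Fin k → Set V) : Set V :=
  L0 ∪ {v ∈ templateNbhd G L0 L |
    ∀ i : Fin k, 4 * ({u ∈ L i | ¬ G.Adj v u}).ncard ≤ G.cliqueNum ^ (s+2)}

/-- `Y(𝓛) = (V(𝓛) ∪ N(𝓛)) \ Z(𝓛)`. -/
def templateY {V : Type*} (G : SimpleGraph V) (s : ℕ) (L0 : Set V) {k : ℕ}
    (L : Fin k → Set V) : Set V :=
  (templateVerts L0 L ∪ templateNbhd G L0 L) \ templateZ G s L0 L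

/-- `N_A(𝓛)`: the vertices of `A \ V(𝓛)` with a neighbour in `L 1 ∪ ⋯ ∪ L k`. -/
def templateNbhdIn {V : Type*} (G : SimpleGraph V) (A : Set V) (L0 : Set V) {k : ℕ}
    (L : Fin k → Set V) : Set V :=
  {v ∈ A | v ∉ templateVerts L0 L ∧ ∃ i : Fin k, ∃ u ∈ L i, G.Adj v u}

/-- `Z_A(𝓛)`: the union of `L0` with the set of vertices of `A \ V(𝓛)` having at most
`ω^{s+2}/4` non-neighbours in each `L i`. -/
def templateZIn {V : Type*} (G : SimpleGraph V) (s : ℕ) (A : Set V) (L0 : Set V) {k : ℕ}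
    (L : Fin k → Set V) : Set V :=
  L0 ∪ {v ∈ A | v ∉ templateVerts L0 L ∧
    ∀ i : Fin k, 4 * ({u ∈ L i | ¬ G.Adj v u}).ncard ≤ G.cliqueNum ^ (s+2)}

/-- `Y_A(𝓛) = (V(𝓛) ∪ N_A(𝓛)) \ Z_A(𝓛)`. -/
def templateYIn {V : Type*} (G : SimpleGraph V) (s : ℕ) (A : Set V) (L0 : Set V) {k : ℕ}
    (L : Fin k → Set V) : Set V :=
  (templateVerts L0 L ∪ templateNbhdIn G A L0 L) \ templateZIn G s A L0 L


/-!
Choose for every dense vertex `v` a witness `u ∈ L j`. The dense vertices sharing a witness `u`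
induce an `H_s`-free graph without `K_{t,t}`, `t = 14 ω^{s+6}`: the two sides `A`, `B` of such a
`K_{t,t}`, together with the vertices of each `L i` (`i ≠ j`) adjacent to `u` and to almost all
of `A ∪ B`, would form a template of larger value than `𝓛`; a double count shows that passing
to these vertices loses fewer than `2 ω^{s+5} + ω^{s+3}` vertices of each `L i`. By the
Kővári–Sós–Turán bound every class is then `t^c`-degenerate, hence `t^c`-colourable, and there
are at most `k t ≤ ω t` witnesses, because the parts of a template contain transversal cliques.
-/

open scoped Finset Function

namespace Set

variable {α β ι : Type*}

lemma ncard_iUnion_eq_sum [Finite α] [Fintype ι] {s : ι → Set α}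
    (h : Pairwise (Disjoint on s)) : (⋃ i, s i).ncard = ∑ i, (s i).ncard := by
  rw [ncard_iUnion_of_finite (fun _ => toFinite _) h, finsum_eq_sum_of_fintype]

/-- Markov's inequality for a relation, by double counting the related pairs. -/
lemma mul_ncard_le_sum_ncard {S : Set α} (hS : S.Finite) (T : Finset β) (r : α → β → Prop)
    (m : ℕ) :
    m * {a ∈ S | m ≤ {b ∈ (T : Set β) | r a b}.ncard}.ncard ≤ ∑ b ∈ T, {a ∈ S | r a b}.ncard := by
  classical
  obtain ⟨S, rfl⟩ := hS.exists_finset_coe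
  have hSc : ∀ p : α → Prop, {a ∈ (S : Set α) | p a}.ncard = #{a ∈ S | p a} := fun p => by
    rw [← ncard_coe_finset, Finset.coe_filter]; rfl
  have hTc : ∀ p : β → Prop, {b ∈ (T : Set β) | p b}.ncard = #{b ∈ T | p b} := fun p => by
    rw [← ncard_coe_finset, Finset.coe_filter]; rfl
  let f : α → ℕ := fun a => {b ∈ (T : Set β) | r a b}.ncard
  rw [hSc, mul_comm, ← smul_eq_mul]
  calc _ = #{a ∈ S | m ≤ f a} • m := by congr
    _ ≤ ∑ a ∈ S with m ≤ f a, f a :=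
        Finset.card_nsmul_le_sum _ f m fun a ha => (Finset.mem_filter.1 ha).2
    _ ≤ ∑ a ∈ S, f a := Finset.sum_le_sum_of_subset (Finset.filter_subset _ _)
    _ = ∑ b ∈ T, {a ∈ (S : Set α) | r a b}.ncard := by
        simp only [f, hSc, hTc]
        exact Finset.sum_card_bipartiteAbove_eq_sum_card_bipartiteBelow r

end Set

namespace SimpleGraph

variable {V : Type*} {G : SimpleGraph V}

lemma two_le_cliqueNum_of_adj [Finite V] {a b : V} (h : G.Adj a b) : 2 ≤ G.cliqueNum := by
  classical
  have hab : G.IsClique (({a, b} : Finset V) : Set V) := by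
    rw [Finset.coe_pair]; exact isClique_pair.mpr fun _ => h
  simpa [Finset.card_pair h.ne] using hab.card_le_cliqueNum

lemma IsClique.ncard_le_cliqueNum [Finite V] {s : Set V} (h : G.IsClique s) :
    s.ncard ≤ G.cliqueNum := by
  obtain ⟨t, rfl⟩ := s.toFinite.exists_finset_coe
  rw [ncard_coe_finset]
  exact h.card_le_cliqueNum

lemma Colorable.of_fibers {ι : Type*} [Fintype ι] (f : V → ι) {n : ℕ}
    (h : ∀ i, (G.induce (f ⁻¹' {i})).Colorable n) : G.Colorable (Fintype.card ι * n) := by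
  have C := fun i => (h i).some
  have hcast : ∀ i j (hij : i = j) (x : f ⁻¹' {i}), C i x = C j ⟨x, hij ▸ x.2⟩ := by
    rintro i _ rfl x; rfl
  refine (Coloring.mk (fun v => (f v, C (f v) ⟨v, rfl⟩)) fun {v w} hvw heq => ?_).colorable.mono
    (by rw [Fintype.card_prod, Fintype.card_fin])
  obtain ⟨hf, hC⟩ := Prod.ext_iff.1 heq
  dsimp only at hf hC
  rw [hcast _ _ hf] at hC
  exact (C (f w)).valid (show (G.induce (f ⁻¹' {f w})).Adj ⟨v, hf⟩ ⟨w, rfl⟩ from hvw) hC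

/-- Greedy choice: each new vertex avoids the at most `m * d` non-neighbours of the clique
built so far. -/
lemma exists_isNClique_of_ncard_nonadj_le [Finite V] {k d m : ℕ} (P : Fin k → Set V)
    (hnonadj : ∀ i j, i ≠ j → ∀ v ∈ P i, {w ∈ P j | ¬ G.Adj v w}.ncard ≤ d)
    (hsize : ∀ i, m * d < (P i).ncard) (hm : m ≤ k) : ∃ C : Finset V, G.IsNClique m C := by
  suffices ∀ n ≤ m, ∃ C : Finset V, G.IsNClique n C ∧ ∀ c ∈ C, ∃ i : Fin k, i < n ∧ c ∈ P i by
    obtain ⟨C, hC, -⟩ := this m le_rfl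
    exact ⟨C, hC⟩
  intro n hn
  induction n with
  | zero => exact ⟨∅, by simp, by simp⟩
  | succ n ih =>
  obtain ⟨C, hC, hCP⟩ := ih (by omega)
  let p : Fin k := ⟨n, by omega⟩
  have hbad : (⋃ c ∈ C, {w ∈ P p | ¬ G.Adj c w}).ncard < (P p).ncard := by
    refine (Finset.set_ncard_biUnion_le _ _).trans_lt (lt_of_le_of_lt ?_ (hsize p))
    refine (Finset.sum_le_card_nsmul _ _ d fun c hc => ?_).trans ?_
    · obtain ⟨i, hi, hci⟩ := hCP c hc
      exact hnonadj i p (Fin.ne_of_lt hi) c hci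
    · rw [hC.card_eq, smul_eq_mul]
      exact Nat.mul_le_mul_right d (by omega)
  obtain ⟨w, hw, hwC⟩ := exists_mem_notMem_of_ncard_lt_ncard hbad
  have hwadj : ∀ c ∈ C, G.Adj w c := fun c hc =>
    (not_not.1 fun h => hwC (mem_iUnion₂.2 ⟨c, hc, hw, h⟩)).symm
  classical
  refine ⟨insert w C, hC.insert hwadj, ?_⟩
  simp only [Finset.mem_insert, forall_eq_or_imp]
  refine ⟨⟨p, Nat.lt_succ_self n, hw⟩, fun c hc => ?_⟩
  obtain ⟨i, hi, hci⟩ := hCP c hc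
  exact ⟨i, Nat.lt_succ_of_lt hi, hci⟩

end SimpleGraph

open SimpleGraph

section Graphs

variable {V W X : Type*} {G : SimpleGraph V}

lemma DegeneracyAtMost.exists_card_adj_le [DecidableRel G.Adj] {d : ℕ} (h : DegeneracyAtMost G d)
    {s : Finset V} (hs : s.Nonempty) : ∃ v ∈ s, #{w ∈ s | G.Adj v w} ≤ d := by
  obtain ⟨v, hv, hdeg⟩ := h ((⊤ : G.Subgraph).induce s) hs
  have hv : v ∈ s := hv
  refine ⟨v, hv, ?_⟩
  convert hdeg using 1
  rw [← ncard_coe_finset, Finset.coe_filter]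
  congr 1
  ext w
  simp [hv]

lemma DegeneracyAtMost.colorable [Fintype V] {d : ℕ} (h : DegeneracyAtMost G d) :
    G.Colorable (d + 1) := by
  classical
  suffices ∀ s : Finset V, ∃ f : V → Fin (d + 1), ∀ a ∈ s, ∀ b ∈ s, G.Adj a b → f a ≠ f b by
    obtain ⟨f, hf⟩ := this Finset.univ
    exact ⟨Coloring.mk f fun hab => hf _ (Finset.mem_univ _) _ (Finset.mem_univ _) hab⟩
  intro s
  induction s using Finset.strongInduction with
  | H s ih =>
  obtain rfl | hs := s.eq_empty_or_nonempty
  · exact ⟨fun _ => 0, by simp⟩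
  -- greedily colour a vertex of degree at most `d` in `s` after the rest of `s`
  obtain ⟨v, hv, hdeg⟩ := h.exists_card_adj_le hs
  obtain ⟨f, hf⟩ := ih _ (Finset.erase_ssubset hv)
  obtain ⟨c, -, hc⟩ := Finset.exists_mem_notMem_of_card_lt_card
    (s := ({w ∈ s | G.Adj v w}).image f) (t := Finset.univ)
    (by simpa using Finset.card_image_le.trans_lt (Nat.lt_succ_of_le hdeg))
  have hcv : ∀ b ∈ s, G.Adj v b → c ≠ f b := fun b hb hvb hcb =>
    hc (hcb ▸ Finset.mem_image_of_mem f (Finset.mem_filter.2 ⟨hb, hvb⟩))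
  refine ⟨Function.update f v c, fun a ha b hb hab => ?_⟩
  by_cases hav : a = v <;> by_cases hbv : b = v
  · exact absurd (hav.trans hbv.symm ▸ hab) (G.loopless.irrefl b)
  · rw [hav, Function.update_self, Function.update_of_ne hbv]
    exact hcv b hb (hav ▸ hab)
  · rw [hbv, Function.update_self, Function.update_of_ne hav]
    exact (hcv a ha (hbv ▸ hab.symm)).symm
  · rw [Function.update_of_ne hav, Function.update_of_ne hbv]
    exact hf a (Finset.mem_erase.2 ⟨hav, ha⟩) b (Finset.mem_erase.2 ⟨hbv, hb⟩) hab

lemma isInducedFree_iff_not_isIndContained {H : SimpleGraph W} :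
    IsInducedFree G H ↔ ¬ H ⊴ G := by
  simp only [IsInducedFree, isIndContained_iff_exists_iso_induce, not_exists]
  exact forall_congr' fun s => not_congr ⟨fun ⟨e⟩ => ⟨e.symm⟩, fun ⟨e⟩ => ⟨e.symm⟩⟩

lemma IsInducedFree.comap {G' : SimpleGraph W} {H : SimpleGraph X} (f : G' ↪g G)
    (h : IsInducedFree G H) : IsInducedFree G' H :=
  isInducedFree_iff_not_isIndContained.2 fun hH =>
    isInducedFree_iff_not_isIndContained.1 h (hH.trans f.isIndContained)

lemma ContainsKtt.exists_subset_range {G' : SimpleGraph W} (f : G' ↪g G) {t : ℕ}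
    (h : ContainsKtt G' t) : ∃ A B : Finset V, #A = t ∧ #B = t ∧ Disjoint A B ∧
      (∀ a ∈ A, ∀ b ∈ B, G.Adj a b) ∧ (A : Set V) ∪ B ⊆ range f := by
  obtain ⟨A, B, hA, hB, hAB, hadj⟩ := h
  refine ⟨A.map f.toEmbedding, B.map f.toEmbedding, by simpa, by simpa,
    Finset.disjoint_map _ |>.2 hAB, ?_, ?_⟩
  · simp only [Finset.mem_map, forall_exists_index, and_imp]
    rintro _ a ha rfl _ b hb rfl
    exact f.map_adj_iff.2 (hadj a ha b hb)
  · simp only [Finset.coe_map, ← image_union]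
    exact image_subset_range _ _

lemma ContainsKtt.map {G' : SimpleGraph W} (f : G' ↪g G) {t : ℕ} (h : ContainsKtt G' t) :
    ContainsKtt G t := by
  obtain ⟨A, B, hA, hB, hAB, hadj, -⟩ := h.exists_subset_range f
  exact ⟨A, B, hA, hB, hAB, hadj⟩

lemma KSTBound.colorable {s c : ℕ} (hc : KSTBound s c) [Fintype W] {G' : SimpleGraph W}
    (hfree : IsInducedFree G' (doubleStarGraph s)) {t : ℕ} (ht : ¬ ContainsKtt G' t) :
    G'.Colorable (t ^ c) := by
  let e := G'.overFinIso rfl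
  rcases hc _ _ (hfree.comap e.symm.toEmbedding) t with hK | ⟨D, hD, hdeg⟩
  · exact absurd (hK.map e.symm.toEmbedding) ht
  · exact (hdeg.colorable.mono hD).of_hom e.toHom

end Graphs

section Template

variable {V : Type*} {G : SimpleGraph V} {s k : ℕ} {L0 : Set V} {L : Fin k → Set V}

local notation "ω" => G.cliqueNum

/-- The conditions an `s`-template imposes on its parts `L 1, …, L k`, for an arbitrary index
type. -/
def IsTemplateFamily (G : SimpleGraph V) (s : ℕ) {ι : Type*} (P : ι → Set V) : Prop :=
  Pairwise (Disjoint on P) ∧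
  (∀ i, G.cliqueNum ^ (s+5) ≤ (P i).ncard ∧ (P i).ncard ≤ 14 * G.cliqueNum ^ (s+6)) ∧
  ∀ i j, i ≠ j → ∀ v ∈ P i, {w ∈ P j | ¬ G.Adj v w}.ncard ≤ G.cliqueNum ^ (s+3)

lemma IsTemplateFamily.sum_elim {ι κ : Type*} {P : ι → Set V} {Q : κ → Set V}
    (hP : IsTemplateFamily G s P) (hQ : IsTemplateFamily G s Q)
    (hdisj : ∀ i j, Disjoint (P i) (Q j))
    (hPQ : ∀ i j, ∀ v ∈ P i, {w ∈ Q j | ¬ G.Adj v w}.ncard ≤ ω ^ (s+3))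
    (hQP : ∀ i j, ∀ v ∈ Q i, {w ∈ P j | ¬ G.Adj v w}.ncard ≤ ω ^ (s+3)) :
    IsTemplateFamily G s (Sum.elim P Q) := by
  refine ⟨?_, ?_, ?_⟩
  · rintro (i | i) (j | j) hij
    · exact hP.1 fun h => hij (congrArg _ h)
    · exact hdisj i j
    · exact (hdisj j i).symm
    · exact hQ.1 fun h => hij (congrArg _ h)
  · rintro (i | i)
    exacts [hP.2.1 i, hQ.2.1 i]
  · rintro (i | i) (j | j) hij
    · exact hP.2.2 i j fun h => hij (congrArg _ h)
    · exact hPQ i j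
    · exact hQP i j
    · exact hQ.2.2 i j fun h => hij (congrArg _ h)

lemma isTemplateFamily_pair {A B : Set V} (hA : A.ncard = 14 * ω ^ (s+6))
    (hB : B.ncard = 14 * ω ^ (s+6)) (hAB : Disjoint A B)
    (hadj : ∀ a ∈ A, ∀ b ∈ B, G.Adj a b) : IsTemplateFamily G s ![A, B] := by
  have hsize : ω ^ (s+5) ≤ 14 * ω ^ (s+6) := by
    rcases Nat.eq_zero_or_pos ω with h | h
    · simp [h]
    · calc ω ^ (s+5) ≤ ω ^ (s+6) := Nat.pow_le_pow_right h (by omega)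
        _ ≤ _ := by omega
  have hempty : ∀ X Y : Set V, (∀ x ∈ X, ∀ y ∈ Y, G.Adj x y) →
      ∀ x ∈ X, {w ∈ Y | ¬ G.Adj x w} = ∅ := fun X Y h x hx =>
    eq_empty_of_forall_notMem fun w hw => hw.2 (h x hx w hw.1)
  refine ⟨?_, ?_, ?_⟩
  · intro i j hij
    fin_cases i <;> fin_cases j <;> simp_all [Function.onFun, hAB.symm]
  · intro i
    fin_cases i <;> simp [hA, hB, hsize]
  · intro i j hij v hv
    fin_cases i <;> fin_cases j <;> simp at hij hv ⊢
    · simp [hempty A B hadj v hv]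
    · simp [hempty B A (fun b hb a ha => (hadj a ha b hb).symm) v hv]

lemma IsTemplate.isTemplateFamily_of_subset [Finite V] (hT : IsTemplate G s L0 L) {ι : Type*}
    {P : ι → Set V} {f : ι → Fin k} (hf : Function.Injective f) (hPL : ∀ i, P i ⊆ L (f i))
    (hsize : ∀ i, ω ^ (s+5) ≤ (P i).ncard) : IsTemplateFamily G s P := by
  obtain ⟨-, hdisj, -, -, hLsize, hnonadj⟩ := hT
  refine ⟨fun i j hij => (hdisj (hf.ne hij)).mono (hPL i) (hPL j), fun i => ⟨hsize i, ?_⟩,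
    fun i j hij v hv => ?_⟩
  · exact (ncard_le_ncard (hPL i)).trans (hLsize (f i)).2
  · refine le_trans (ncard_le_ncard ?_) (hnonadj _ _ (hf.ne hij) v (hPL i hv))
    exact fun w hw => ⟨hPL j hw.1, hw.2⟩

lemma IsOptimalTemplate.sum_ncard_add_le_templateValue [Finite V] (hT : IsOptimalTemplate G s L0 L)
    {ι : Type*} [Fintype ι] {P : ι → Set V} (hP : IsTemplateFamily G s P) :
    ∑ i, (P i).ncard + Fintype.card ι * ω ^ (s+5) ≤ templateValue G s L0 L := by
  let e := (Fintype.equivFin ι).symm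
  have hT' : IsTemplate G s ∅ (P ∘ e) :=
    ⟨fun _ => empty_disjoint _, fun i j hij => hP.1 (e.injective.ne hij), isClique_empty,
      by simp, fun i => hP.2.1 _, fun i j hij => hP.2.2 _ _ (e.injective.ne hij)⟩
  calc _ = templateValue G s ∅ (P ∘ e) := by
        rw [templateValue, ncard_iUnion_eq_sum hT'.2.1, ncard_empty, Function.comp_def,
          e.sum_comp (fun i => (P i).ncard)]
        simp
    _ ≤ _ := hT.2 _ _ _ hT'

lemma IsTemplate.le_cliqueNum [Finite V] (hT : IsTemplate G s L0 L) (hω : 2 ≤ ω) :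
    k ≤ ω := by
  by_contra! hk
  have hsize : ∀ i, (ω + 1) * ω ^ (s+3) < (L i).ncard := fun i =>
    calc (ω + 1) * ω ^ (s+3)
        < ω ^ 2 * ω ^ (s+3) := by gcongr; nlinarith
      _ = ω ^ (s+5) := by ring
      _ ≤ _ := (hT.2.2.2.2.1 i).1
  obtain ⟨C, hC⟩ := exists_isNClique_of_ncard_nonadj_le L hT.2.2.2.2.2 hsize hk
  have := hC.isClique.card_le_cliqueNum
  rw [hC.card_eq] at this
  omega

lemma IsTemplate.templateValue_le [Finite V] (hT : IsTemplate G s L0 L) :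
    templateValue G s L0 L ≤
      ∑ i, (L i).ncard + 7 * ω ^ (s+6) + k * ω ^ (s+5) := by
  have hL0 : 7 * ω ^ (s+5) * L0.ncard ≤ 7 * ω ^ (s+6) := by
    calc _ ≤ 7 * ω ^ (s+5) * ω := by gcongr; exact hT.2.2.1.ncard_le_cliqueNum
      _ = _ := by ring
  rw [templateValue, ncard_iUnion_eq_sum hT.2.1]
  omega

/-- `u ∈ L j` witnesses that `v` is dense, as in `TemplateDense`. -/
def TemplateDenseVia (G : SimpleGraph V) (s : ℕ) (L : Fin k → Set V) (j : Fin k) (u v : V) :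
    Prop :=
  ∀ i : Fin k, i ≠ j → 14 * ({w ∈ L i | G.Adj u w ∧ ¬ G.Adj v w}).ncard < G.cliqueNum ^ (s+2)

def templateGoodPart (G : SimpleGraph V) (s : ℕ) (L : Fin k → Set V) (u : V) (X : Set V)
    (i : Fin k) : Set V :=
  {w ∈ L i | G.Adj u w ∧ {x ∈ X | ¬ G.Adj w x}.ncard ≤ G.cliqueNum ^ (s+3)}

/-- Markov's inequality bounds the neighbours of `u` in `L i` with many non-neighbours in `X`,
since every vertex of `X` misses fewer than `ω^{s+2}/14` of them. -/
lemma IsTemplate.ncard_lt_ncard_templateGoodPart [Finite V] (hT : IsTemplate G s L0 L)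
    {i j : Fin k} (hij : i ≠ j) {u : V} (hu : u ∈ L j) {X : Finset V} (hXne : X.Nonempty)
    (hX : #X ≤ 28 * ω ^ (s+6)) (hdense : ∀ x ∈ X, TemplateDenseVia G s L j u x) :
    (L i).ncard < (templateGoodPart G s L u X i).ncard + 2 * ω ^ (s+5) +
      ω ^ (s+3) := by
  let M := {w ∈ L i | G.Adj u w}
  let Bad := {w ∈ M | ω ^ (s+3) + 1 ≤ {x ∈ (X : Set V) | ¬ G.Adj w x}.ncard}
  have hLM : (L i).ncard ≤ M.ncard + ω ^ (s+3) := by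
    refine (ncard_le_ncard fun w hw => ?_).trans
      ((ncard_union_le M {w ∈ L i | ¬ G.Adj u w}).trans (Nat.add_le_add_left
        (hT.2.2.2.2.2 j i hij.symm u hu) _))
    by_cases h : G.Adj u w
    exacts [Or.inl ⟨hw, h⟩, Or.inr ⟨hw, h⟩]
  have hMGB : M.ncard ≤ (templateGoodPart G s L u X i).ncard + Bad.ncard := by
    refine (ncard_le_ncard fun w hw => ?_).trans (ncard_union_le _ _)
    by_cases h : {x ∈ (X : Set V) | ¬ G.Adj w x}.ncard ≤ ω ^ (s+3)
    exacts [Or.inl ⟨hw.1, hw.2, h⟩, Or.inr ⟨hw, by omega⟩]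
  have hsum : 14 * ∑ x ∈ X, {w ∈ M | ¬ G.Adj w x}.ncard < #X * ω ^ (s+2) := by
    rw [Finset.mul_sum, ← smul_eq_mul, ← Finset.sum_const]
    refine Finset.sum_lt_sum_of_nonempty hXne fun x hx => ?_
    have hMx : {w ∈ M | ¬ G.Adj w x} = {w ∈ L i | G.Adj u w ∧ ¬ G.Adj x w} := by
      ext w
      simp [M, G.adj_comm x, and_assoc]
    rw [hMx]
    exact hdense x hx i hij
  have hBad : (ω ^ (s+3) + 1) * Bad.ncard < (ω ^ (s+3) + 1) * (2 * ω ^ (s+5)) := by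
    have hXq : #X * ω ^ (s+2) ≤ 28 * (ω ^ (s+3) * ω ^ (s+5)) :=
      (Nat.mul_le_mul_right _ hX).trans_eq (by ring)
    have hmarkov : (ω ^ (s+3) + 1) * Bad.ncard ≤ ∑ x ∈ X, {w ∈ M | ¬ G.Adj w x}.ncard :=
      mul_ncard_le_sum_ncard (toFinite M) X (fun w x => ¬ G.Adj w x) _
    linarith [Nat.zero_le (ω ^ (s+5))]
  have := Nat.lt_of_mul_lt_mul_left hBad
  omega

lemma IsTemplate.isTemplateFamily_extend [Finite V] [DecidableEq V] (hT : IsTemplate G s L0 L)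
    (hω : 1 ≤ ω) {j : Fin k} {u : V} {A B : Finset V}
    (hA : #A = 14 * ω ^ (s+6)) (hB : #B = 14 * ω ^ (s+6))
    (hAB : Disjoint A B) (hadj : ∀ a ∈ A, ∀ b ∈ B, G.Adj a b)
    (hout : ∀ x ∈ A ∪ B, x ∉ templateVerts L0 L)
    (hdense : ∀ x ∈ A ∪ B, TemplateDenseVia G s L j u x) {K : Finset (Fin k)}
    (hK : ∀ i ∈ K, i ≠ j ∧ ω ^ (s+5) ≤ (templateGoodPart G s L u ↑(A ∪ B) i).ncard) :
    IsTemplateFamily G s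
      (Sum.elim ![(A : Set V), B] fun i : K => templateGoodPart G s L u ↑(A ∪ B) i) := by
  have hmem : ∀ i, ∀ v ∈ ![(A : Set V), B] i, v ∈ A ∪ B := by
    intro i v hv
    fin_cases i <;> simp_all
  refine (isTemplateFamily_pair (by simpa) (by simpa) (by simpa) hadj).sum_elim
    (hT.isTemplateFamily_of_subset Subtype.val_injective (fun i w hw => hw.1)
      fun i => (hK i i.2).2) ?_ ?_ ?_
  · refine fun i i' => Set.disjoint_left.2 fun v hv hv' => hout v (hmem i v hv) ?_
    exact mem_union_right _ (mem_iUnion.2 ⟨i'.1, hv'.1⟩)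
  · intro i i' v hv
    have h := hdense v (hmem i v hv) i' (hK i' i'.2).1
    have h23 : ω ^ (s+2) ≤ ω ^ (s+3) := Nat.pow_le_pow_right hω (by omega)
    have hsub : {w ∈ templateGoodPart G s L u ↑(A ∪ B) i' | ¬ G.Adj v w} ⊆
        {w ∈ L i' | G.Adj u w ∧ ¬ G.Adj v w} := fun w hw => ⟨hw.1.1, hw.1.2.1, hw.2⟩
    have := ncard_le_ncard hsub
    omega
  · intro i i' v hv
    have hsub : {w ∈ ![(A : Set V), B] i' | ¬ G.Adj v w} ⊆
        {x ∈ ((A ∪ B : Finset V) : Set V) | ¬ G.Adj v x} := fun w hw =>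
      ⟨Finset.mem_coe.2 (hmem i' w hw.1), hw.2⟩
    exact (ncard_le_ncard hsub).trans hv.2.2

/-- Replacing `𝓛` by the template with parts `A`, `B` and the large good parts would increase
the value. -/
lemma IsOptimalTemplate.false_of_completeBipartite [Finite V] [DecidableEq V]
    (hT : IsOptimalTemplate G s L0 L)
    (hω : 2 ≤ ω) {j : Fin k} {u : V} (hu : u ∈ L j) {A B : Finset V}
    (hA : #A = 14 * ω ^ (s+6)) (hB : #B = 14 * ω ^ (s+6))
    (hAB : Disjoint A B) (hadj : ∀ a ∈ A, ∀ b ∈ B, G.Adj a b)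
    (hout : ∀ x ∈ A ∪ B, x ∉ templateVerts L0 L)
    (hdense : ∀ x ∈ A ∪ B, TemplateDenseVia G s L j u x) : False := by
  classical
  let good := templateGoodPart G s L u ↑(A ∪ B)
  let K := Finset.univ.filter fun i => i ≠ j ∧ ω ^ (s+5) ≤ (good i).ncard
  have hnew := hT.sum_ncard_add_le_templateValue (hT.1.isTemplateFamily_extend (by omega) hA hB
    hAB hadj hout hdense (K := K) fun i hi => (Finset.mem_filter.1 hi).2)
  simp only [Fintype.sum_sum_type, Fin.sum_univ_two, Sum.elim_inl, Sum.elim_inr,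
    Matrix.cons_val_zero, Matrix.cons_val_one, ncard_coe_finset, Fintype.card_sum,
    Fintype.card_fin, Fintype.card_coe, Nat.reduceSucc, hA, hB] at hnew
  rw [Finset.sum_coe_sort K fun i => (good i).ncard] at hnew
  have hq6 : 0 < ω ^ (s+6) := by positivity
  have hX : #(A ∪ B) = 28 * ω ^ (s+6) := by
    rw [Finset.card_union_of_disjoint hAB, hA, hB]; ring
  have hpart : ∀ i, (L i).ncard + ω ^ (s+5) ≤ (if i ∈ K then (good i).ncard + ω ^ (s+5) else 0)
      + (5 * ω ^ (s+5) + if i = j then 14 * ω ^ (s+6) else 0) := by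
    intro i
    have h35 : ω ^ (s+3) ≤ ω ^ (s+5) := Nat.pow_le_pow_right (by omega) (by omega)
    by_cases hij : i = j
    · subst hij
      have : (L i).ncard ≤ 14 * ω ^ (s+6) := (hT.1.2.2.2.2.1 i).2
      simp [K]
      omega
    · have : (L i).ncard < (good i).ncard + 2 * ω ^ (s+5) + ω ^ (s+3) :=
        hT.1.ncard_lt_ncard_templateGoodPart hij hu (Finset.card_pos.1 (by omega)) hX.le hdense
      by_cases hiK : i ∈ K
      · simp only [hiK, hij, if_true, if_false]; omega
      · have : (good i).ncard < ω ^ (s+5) := by simpa [K, hij] using hiK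
        simp only [hiK, hij, if_false]; omega
  have hsum := Finset.sum_le_sum fun i (_ : i ∈ Finset.univ) => hpart i
  simp only [Finset.sum_add_distrib, Finset.sum_ite_mem, Finset.univ_inter, Finset.sum_ite_eq',
    Finset.mem_univ, if_true, Finset.sum_const, Finset.card_univ, Fintype.card_fin,
    smul_eq_mul] at hsum
  have hk : k * ω ^ (s+5) ≤ ω ^ (s+6) := by
    calc k * ω ^ (s+5) ≤ ω * ω ^ (s+5) := Nat.mul_le_mul_right _ (hT.1.le_cliqueNum hω)
      _ = ω ^ (s+6) := by ring
  have hold := hT.1.templateValue_le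
  linarith [Nat.zero_le (ω ^ (s+5))]

lemma IsOptimalTemplate.not_containsKtt [Finite V] (hT : IsOptimalTemplate G s L0 L)
    (hω : 2 ≤ ω) {j : Fin k} {u : V} (hu : u ∈ L j) {W : Type*} {G' : SimpleGraph W}
    (φ : G' ↪g G) (hφ : ∀ x, φ x ∉ templateVerts L0 L ∧ TemplateDenseVia G s L j u (φ x)) :
    ¬ ContainsKtt G' (14 * ω ^ (s+6)) := by
  classical
  intro hK
  obtain ⟨A, B, hA, hB, hAB, hadj, hrange⟩ := hK.exists_subset_range φ
  have hφ' : ∀ x ∈ A ∪ B, x ∉ templateVerts L0 L ∧ TemplateDenseVia G s L j u x := by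
    intro x hx
    obtain ⟨y, rfl⟩ := hrange (by simpa using hx)
    exact hφ y
  exact hT.false_of_completeBipartite hω hu hA hB hAB hadj (fun x hx => (hφ' x hx).1)
    fun x hx => (hφ' x hx).2

lemma IsTemplate.sum_ncard_le [Finite V] (hT : IsTemplate G s L0 L) (hω : 2 ≤ ω) :
    ∑ i, (L i).ncard ≤ ω * (14 * ω ^ (s+6)) :=
  calc ∑ i, (L i).ncard ≤ ∑ _i : Fin k, 14 * ω ^ (s+6) :=
        Finset.sum_le_sum fun i _ => (hT.2.2.2.2.1 i).2
    _ ≤ _ := by simpa using Nat.mul_le_mul_right _ (hT.le_cliqueNum hω)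

end Template

theorem template_dense_chromatic_general {V : Type*} [Fintype V] (G : SimpleGraph V) (s : ℕ)
    (hfree : IsInducedFree G (doubleStarGraph s))
    (L0 : Set V) (k : ℕ) (L : Fin k → Set V) (hT : IsOptimalTemplate G s L0 L)
    (c : ℕ) (hc : KSTBound s c) :
    (G.induce {v | v ∈ templateNbhd G L0 L ∧ TemplateDense G s L v}).chromaticNumber
      ≤ (((14 * G.cliqueNum ^ (s+6)) ^ (c+1) * G.cliqueNum : ℕ) : ℕ∞) := by
  classical
  set S := {v | v ∈ templateNbhd G L0 L ∧ TemplateDense G s L v}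
  set t := 14 * G.cliqueNum ^ (s+6)
  rcases S.eq_empty_or_nonempty with hS | ⟨v, hv⟩
  · have : IsEmpty S := isEmpty_coe_sort.2 hS
    exact (Colorable.of_isEmpty _).chromaticNumber_le
  obtain ⟨-, u, -, hvu⟩ := hv.1.2
  have hω := two_le_cliqueNum_of_adj hvu
  choose j w hw hdense using fun x : S => x.2.2
  let f : S → Σ i, L i := fun x => ⟨j x, w x, hw x⟩
  have hfiber : ∀ p, ((G.induce S).induce (f ⁻¹' {p})).Colorable (t ^ c) := by
    rintro ⟨i, p⟩
    let φ := (Embedding.induce S).comp (Embedding.induce (G := G.induce S) (f ⁻¹' {⟨i, p⟩}))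
    refine hc.colorable (hfree.comap φ) (hT.not_containsKtt hω p.2 φ fun x => ?_)
    have hx : f x = ⟨i, p⟩ := x.2
    have hj : j x = i := congrArg Sigma.fst hx
    have hw : w x = p := congrArg (fun q : Σ i, L i => (q.2 : V)) hx
    have hxu := hdense x
    rw [hj, hw] at hxu
    exact ⟨x.1.2.1.1, hxu⟩
  have hcard : Fintype.card (Σ i, L i) ≤ G.cliqueNum * t := by
    simpa [Fintype.card_sigma, ← Nat.card_coe_set_eq] using hT.1.sum_ncard_le hω
  refine ((Colorable.of_fibers f hfiber).mono ?_).chromaticNumber_le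
  calc Fintype.card (Σ i, L i) * t ^ c ≤ G.cliqueNum * t * t ^ c := by gcongr
    _ = t ^ (c+1) * G.cliqueNum := by ring

/-- If `G` is `H_s`-free, `𝓛` is an optimal `s`-template of value at least `28 ω^{s+6}`, and
`c` satisfies the Kővári–Sós–Turán-type bound for `H_s`, then the set of dense vertices has
chromatic number at most `(14 ω^{s+6})^{c+1} ω`. -/
theorem template_dense_chromatic {V : Type*} [Fintype V] (G : SimpleGraph V) (s : ℕ)
    (hs : 1 ≤ s) (hfree : IsInducedFree G (doubleStarGraph s))
    (L0 : Set V) (k : ℕ) (L : Fin k → Set V) (hT : IsOptimalTemplate G s L0 L)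
    (hval : 28 * G.cliqueNum ^ (s+6) ≤ templateValue G s L0 L)
    (c : ℕ) (hc : KSTBound s c) :
    (G.induce {v | v ∈ templateNbhd G L0 L ∧ TemplateDense G s L v}).chromaticNumber
      ≤ (((14 * G.cliqueNum ^ (s+6)) ^ (c+1) * G.cliqueNum : ℕ) : ℕ∞) :=
  template_dense_chromatic_general G s hfree L0 k L hT c hc
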